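/- arXiv:2312.17551 — 5 statements merged into one kernel-verified Lean document; each statement's English description precedes it below -/
import Mathlib

section
/- Let G be a finite group and let f : G → ℂ be an S-character of G distinct from the constant function 1. Then there exists g ∈ G such that f(g) = 0. -/
/-!
If an S-character `f ≠ 1` had no zero, its values would be positive reals with mean `1`, not all
equal to `1`, so their product would lie strictly between `0` and `1` (AM–GM). On the other hand
`χ(g ^ k) = p_g(ζ ^ k)` for a character `χ`, a primitive `|G|`-th root of unity `ζ` and an integer
polynomial `p_g` (character values are power sums of eigenvalues, which are roots of unity). Hence
the Galois automorphism `ζ ↦ ζ ^ k`, `k` coprime to `|G|`, sends `∏ g, f g` to `∏ g, f (g ^ k)`,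
the same product because `g ↦ g ^ k` permutes `G`. So the product is a rational algebraic
integer, i.e. an integer.
-/

open Polynomial

theorem LinearMap.trace_pow_eq_mul_finrank_of_isNilpotent {R M : Type*} [CommRing R] [IsReduced R]
    [AddCommGroup M] [Module R M] [Module.Free R M] [Module.Finite R M] {f : Module.End R M} {μ : R}
    (hf : IsNilpotent (f - algebraMap R _ μ)) (k : ℕ) :
    trace R M (f ^ k) = μ ^ k * Module.finrank R M := by
  induction k with
  | zero => simp
  | succ k ih =>
    rw [pow_succ, Module.End.mul_eq_comp,
      trace_comp_eq_mul_of_commute_of_isNilpotent μ (Commute.self_pow f k).symm hf, ih, pow_succ]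
    ring

namespace Module.End

variable {K V : Type*} [Field K] [AddCommGroup V] [Module K V] [FiniteDimensional K V]

theorem trace_pow_eq_sum_roots_charpoly_pow [IsAlgClosed K] (f : End K V) (k : ℕ) :
    LinearMap.trace K V (f ^ k) = (f.charpoly.roots.map (· ^ k)).sum := by
  classical
  have hInt := DirectSum.isInternal_submodule_of_iSupIndep_of_iSup_eq_top
    f.independent_maxGenEigenspace (iSup_maxGenEigenspace_eq_top f)
  have hfin : {μ | f.maxGenEigenspace μ ≠ ⊥}.Finite :=
    WellFoundedGT.finite_ne_bot_of_iSupIndep f.independent_maxGenEigenspace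
  have hroots : hfin.toFinset = f.charpoly.roots.toFinset := by
    ext μ
    simp [← Submodule.finrank_eq_zero, LinearMap.finrank_maxGenEigenspace_eq, ← count_roots,
      f.charpoly_monic.ne_zero]
  rw [LinearMap.trace_eq_sum_trace_restrict' hInt hfin
      (fun μ => mapsTo_maxGenEigenspace_of_comm ((Commute.refl f).pow_right k) μ),
    Finset.sum_multiset_map_count, ← hroots]
  refine Finset.sum_congr rfl fun μ _ => ?_
  have hmaps := mapsTo_maxGenEigenspace_of_comm (Commute.refl f) μ
  have hnil : IsNilpotent (f.restrict hmaps - algebraMap K _ μ) :=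
    isNilpotent_restrict_maxGenEigenspace_sub_algebraMap f μ
  rw [← pow_restrict k hmaps, LinearMap.trace_pow_eq_mul_finrank_of_isNilpotent hnil,
    LinearMap.finrank_maxGenEigenspace_eq, count_roots, nsmul_eq_mul, mul_comm]

theorem pow_eq_one_of_mem_roots_charpoly {f : End K V} {n : ℕ} (hf : f ^ n = 1) {μ : K}
    (hμ : μ ∈ f.charpoly.roots) : μ ^ n = 1 := by
  have : f.HasEigenvalue μ := (hasEigenvalue_iff_isRoot_charpoly f μ).mpr (isRoot_of_mem_roots hμ)
  obtain ⟨v, hv⟩ := this.exists_hasEigenvector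
  have := hv.pow_apply n
  rw [hf, one_apply] at this
  exact smul_left_injective K hv.2 (by simpa using this.symm)

end Module.End

theorem IsPrimitiveRoot.exists_aeval_pow_eq_sum_pow {R : Type*} [CommRing R] [IsDomain R] {ζ : R}
    {n : ℕ} [NeZero n] (hζ : IsPrimitiveRoot ζ n) (s : Multiset R) (hs : ∀ μ ∈ s, μ ^ n = 1) :
    ∃ p : ℤ[X], ∀ k : ℕ, aeval (ζ ^ k) p = (s.map (· ^ k)).sum := by
  induction s using Multiset.induction_on with
  | empty => exact ⟨0, by simp⟩
  | cons μ s ih =>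
    obtain ⟨p, hp⟩ := ih fun ν hν => hs ν (Multiset.mem_cons_of_mem hν)
    obtain ⟨a, -, rfl⟩ := hζ.eq_pow_of_pow_eq_one (hs _ (Multiset.mem_cons_self _ s))
    exact ⟨X ^ a + p, fun k => by simp [hp, ← pow_mul, mul_comm]⟩

theorem IsPrimitiveRoot.exists_intCast_eq_aeval {L : Type*} [Field L] [CharZero L] {ζ : L} {n : ℕ}
    [NeZero n] (hζ : IsPrimitiveRoot ζ n) (p : ℤ[X])
    (hp : ∀ k : ℕ, k.Coprime n → aeval (ζ ^ k) p = aeval ζ p) : ∃ z : ℤ, aeval ζ p = z := by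
  let K := IntermediateField.adjoin ℚ {b : L | ∃ m ∈ ({n} : Set ℕ), m ≠ 0 ∧ b ^ m = 1}
  have : IsCyclotomicExtension {n} ℚ K :=
    IntermediateField.isCyclotomicExtension_adjoin_of_exists_isPrimitiveRoot {n} ℚ L
      (by rintro m rfl -; exact ⟨ζ, hζ⟩)
  have := IsCyclotomicExtension.isGalois {n} ℚ K
  have := IsCyclotomicExtension.finiteDimensional {n} ℚ K
  let ζK : K := ⟨ζ, IntermediateField.subset_adjoin _ _ ⟨n, rfl, NeZero.ne n, hζ.pow_eq_one⟩⟩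
  have hζK : IsPrimitiveRoot ζK n := hζ.of_map_of_injective (f := K.val) Subtype.val_injective
  have hval : ∀ x : K, aeval (x : L) p = aeval x p :=
    fun x => aeval_algHom_apply (K.val.restrictScalars ℤ) x p
  have hfix : ∀ σ : K ≃ₐ[ℚ] K, σ (aeval ζK p) = aeval ζK p := by
    intro σ
    have hσ : σ (aeval ζK p) = aeval (σ ζK) p :=
      (aeval_algHom_apply (σ.toAlgHom.restrictScalars ℤ) ζK p).symm
    rw [hσ, ← hζK.autToPow_spec ℚ σ]
    apply Subtype.val_injective
    rw [← hval, ← hval]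
    exact hp _ (ZMod.val_coe_unit_coprime _)
  obtain ⟨q, hq⟩ := (IsGalois.mem_range_algebraMap_iff_fixed (aeval ζK p)).mpr hfix
  have hζq : aeval ζ p = algebraMap ℚ L q := by
    rw [hval ζK, ← hq]
    rfl
  have hint : IsIntegral ℤ (algebraMap ℚ L q) :=
    hζq ▸ adjoin_le_integralClosure (hζ.isIntegral (NeZero.pos n))
      (aeval_mem_adjoin_singleton ℤ ζ)
  obtain ⟨z, rfl⟩ := IsIntegrallyClosed.isIntegral_iff.mp (IsIntegral.ratCast_iff.mp hint)
  exact ⟨z, by simp [hζq]⟩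

theorem FDRep.exists_aeval_pow_eq_character_pow {K G : Type*} [Field K] [IsAlgClosed K] [Group G]
    {n : ℕ} [NeZero n] {ζ : K} (hζ : IsPrimitiveRoot ζ n) (V : FDRep K G) {g : G}
    (hg : g ^ n = 1) : ∃ p : ℤ[X], ∀ k : ℕ, V.character (g ^ k) = aeval (ζ ^ k) p := by
  have hρ : V.ρ g ^ n = 1 := by rw [← map_pow, hg, map_one]
  obtain ⟨p, hp⟩ := hζ.exists_aeval_pow_eq_sum_pow _
    fun μ hμ => Module.End.pow_eq_one_of_mem_roots_charpoly hρ hμ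
  exact ⟨p, fun k => by
    rw [hp, FDRep.character, map_pow, Module.End.trace_pow_eq_sum_roots_charpoly_pow]⟩

theorem FDRep.exists_prod_character_sub_character_eq_intCast {G : Type*} [Group G] [Fintype G]
    (V W : FDRep ℂ G) : ∃ z : ℤ, ∏ g, (V.character g - W.character g) = z := by
  obtain ⟨ζ, hζ⟩ : ∃ ζ : ℂ, IsPrimitiveRoot ζ (Fintype.card G) :=
    ⟨_, Complex.isPrimitiveRoot_exp _ Fintype.card_ne_zero⟩
  choose pV hpV using fun g : G =>
    V.exists_aeval_pow_eq_character_pow hζ (pow_card_eq_one (x := g))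
  choose pW hpW using fun g : G =>
    W.exists_aeval_pow_eq_character_pow hζ (pow_card_eq_one (x := g))
  have hP : ∀ k : ℕ, aeval (ζ ^ k) (∏ g, (pV g - pW g)) =
      ∏ g, (V.character (g ^ k) - W.character (g ^ k)) := by
    simp [map_prod, hpV, hpW]
  have hP1 := hP 1
  simp only [pow_one] at hP1
  obtain ⟨z, hz⟩ := hζ.exists_intCast_eq_aeval (∏ g, (pV g - pW g)) fun k hk => by
    have hk' : (Nat.card G).Coprime k := by rw [Nat.card_eq_fintype_card]; exact hk.symm
    rw [hP, hP1]
    exact Equiv.prod_comp (powCoprime hk') fun g => V.character g - W.character g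
  exact ⟨z, hP1 ▸ hz⟩

theorem Real.prod_lt_one_of_sum_eq_card {ι : Type*} {s : Finset ι} {x : ι → ℝ}
    (hpos : ∀ i ∈ s, 0 < x i) (hsum : ∑ i ∈ s, x i = s.card) (hne : ∃ i ∈ s, x i ≠ 1) :
    ∏ i ∈ s, x i < 1 := by
  obtain ⟨j, hj, hxj⟩ := hne
  rw [← Real.log_neg_iff (Finset.prod_pos hpos), Real.log_prod fun i hi => (hpos i hi).ne']
  calc ∑ i ∈ s, Real.log (x i) < ∑ i ∈ s, (x i - 1) :=
        Finset.sum_lt_sum (fun i hi => Real.log_le_sub_one_of_pos (hpos i hi))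
          ⟨j, hj, Real.log_lt_sub_one_of_pos (hpos j hj) hxj⟩
    _ = 0 := by simp [Finset.sum_sub_distrib, hsum]

open ComplexOrder in
/-- Theorem 4.2 (Zhmud): an S-character of a finite group distinct from the constant
character `1` has a zero. Here an S-character is a virtual character (difference of
characters of two finite-dimensional complex representations) taking nonnegative real
values, whose mean over the group is `1`. -/
theorem stmt_4 {G : Type} [Group G] [Fintype G] (f : G → ℂ)
    (hvirt : ∃ V W : FDRep ℂ G, ∀ g, f g = V.character g - W.character g)
    (hpos : ∀ g, 0 ≤ f g)
    (hmean : (1 / (Fintype.card G : ℂ)) * ∑ g, f g = 1)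
    (hne : f ≠ fun _ => 1) :
    ∃ g : G, f g = 0 := by
  by_contra! hzero
  obtain ⟨V, W, hVW⟩ := hvirt
  obtain ⟨F, rfl⟩ : ∃ F : G → ℝ, f = fun g => (F g : ℂ) :=
    ⟨fun g => (f g).re,
      funext fun g => Complex.eq_re_of_ofReal_le (r := 0) (by simpa using hpos g)⟩
  have hFpos : ∀ g, 0 < F g := fun g =>
    lt_of_le_of_ne (by simpa using hpos g) (by simpa [eq_comm] using hzero g)
  have hsum : ∑ g, F g = Fintype.card G := by
    field_simp at hmean
    exact_mod_cast hmean
  have hne' : ∃ g ∈ Finset.univ, F g ≠ 1 := by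
    by_contra! h
    exact hne (funext fun g => by simp [h g])
  obtain ⟨z, hz⟩ := FDRep.exists_prod_character_sub_character_eq_intCast V W
  have hprod : ∏ g, F g = z := by
    simp only [← hVW] at hz
    exact_mod_cast hz
  have hz0 : 0 < z := by exact_mod_cast hprod ▸ Finset.prod_pos fun g _ => hFpos g
  have hz1 : z < 1 := by
    exact_mod_cast hprod ▸ Real.prod_lt_one_of_sum_eq_card (fun g _ => hFpos g) hsum hne'
  omega
end

section
/- Let G be a finite group acting transitively on a finite set X with at least two elements. Then there exists g ∈ G which fixes no point of X. -/
/-- Jordan's theorem: a finite group acting transitively on a finite set with at least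
two elements contains an element fixing no point. -/
theorem stmt_6 {G : Type*} [Group G] [Fintype G] {X : Type*} [Fintype X]
    [MulAction G X] (htrans : MulAction.IsPretransitive G X)
    (hcard : 2 ≤ Fintype.card X) :
    ∃ g : G, ∀ x : X, g • x ≠ x := by
  classical
  by_contra h
  push_neg at h
  have hne : Nonempty X := Fintype.card_pos_iff.mp (by omega)
  haveI : Nonempty X := hne
  haveI := ((MulAction.pretransitive_iff_unique_quotient_of_nonempty G X).mp htrans).some
  have hburn := MulAction.sum_card_fixedBy_eq_card_orbits_mul_card_group G X
  rw [Fintype.card_unique, one_mul] at hburn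
  have h1 : Fintype.card (MulAction.fixedBy X (1 : G)) = Fintype.card X := by
    apply Fintype.card_of_finset'
    intro x
    simp [MulAction.mem_fixedBy]
  have hge : ∀ g : G, 1 ≤ Fintype.card (MulAction.fixedBy X g) := by
    intro g
    obtain ⟨x, hx⟩ := h g
    exact Fintype.card_pos_iff.mpr ⟨⟨x, hx⟩⟩
  have := Finset.sum_le_sum (s := (Finset.univ.erase (1 : G)))
    (f := fun _ => 1) (g := fun g : G => Fintype.card (MulAction.fixedBy X g))
    (fun g _ => hge g)
  have hsplit : (∑ g : G, Fintype.card (MulAction.fixedBy X g)) =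
      Fintype.card (MulAction.fixedBy X (1 : G)) +
      ∑ g ∈ Finset.univ.erase (1 : G), Fintype.card (MulAction.fixedBy X g) := by
    rw [← Finset.sum_erase_add _ _ (Finset.mem_univ (1 : G))]
    ring
  have hcardG : Finset.card (Finset.univ.erase (1 : G)) = Fintype.card G - 1 := by
    simp [Finset.card_erase_of_mem]
  simp only [Finset.sum_const, smul_eq_mul, mul_one, hcardG] at this
  have hGpos : 1 ≤ Fintype.card G := Fintype.card_pos
  omega
end

section
/- Let G be a finite group and let f : G → ℂ be an S-character of G, distinct from the constant function 1, all of whose values are (nonnegative) integers. Let Z_f = {g ∈ G : f(g) = 0} and let M = max_{g∈G} f(g). Then |Z_f| / |G| ≥ 1 / M, i.e., |Z_f| · M ≥ |G|. -/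
/-!
Write `f = χ_V - χ_W` with values `n g ∈ ℕ`, and let `M = max n`. Since `f` is real,
`f² = χ_{V⊗V} + χ_{W⊗W} - 2 χ_{V⊗W}` is again a virtual character, so `|G|` divides `∑ n²`.
The mean condition says `∑ n = |G|`, so `∑ (n - 1)² = ∑ n² - |G|` is positive (as `f ≠ 1`) and
hence `∑ n² ≥ 2 |G|`. On the other hand `(n - 1)(n - M) ≤ 0` where `n ≠ 0` and equals `M` where
`n = 0`; summing gives `∑ n² - |G| ≤ M · |Z_f|`.
-/

open Finset Module Representation CategoryTheory MonoidalCategory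

namespace FDRep

variable {k : Type*} [Field k] [CharZero k] {G : Type} [Group G] [Fintype G]

theorem sum_character_eq_card_mul_finrank_invariants (V : FDRep k G) :
    ∑ g : G, V.character g = Fintype.card G * finrank k (invariants V.ρ) := by
  have hcard : (Fintype.card G : k) ≠ 0 := Nat.cast_ne_zero.mpr Fintype.card_ne_zero
  have : Invertible (Nat.card G : k) := by
    rw [Nat.card_eq_fintype_card]; exact invertibleOfNonzero hcard
  rw [← average_char_eq_finrank_invariants V, Nat.card_eq_fintype_card,
    mul_inv_cancel_left₀ hcard]

theorem exists_sum_sq_character_sub_eq_card_mul (V W : FDRep k G) :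
    ∃ m : ℤ, ∑ g : G, (V.character g - W.character g) ^ 2 = Fintype.card G * m := by
  refine ⟨finrank k (invariants (V ⊗ V).ρ) + finrank k (invariants (W ⊗ W).ρ)
    - 2 * finrank k (invariants (V ⊗ W).ρ), ?_⟩
  have hsq : ∀ g, (V.character g - W.character g) ^ 2
      = (V ⊗ V).character g + (W ⊗ W).character g - 2 * (V ⊗ W).character g := by
    intro g
    simp only [char_tensor, Pi.mul_apply]
    ring
  simp only [hsq, sum_sub_distrib, sum_add_distrib, ← mul_sum,
    sum_character_eq_card_mul_finrank_invariants]
  push_cast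
  ring

end FDRep

section Counting

variable {α : Type*}

theorem Finset.sum_sq_add_sup_mul_card_le (s : Finset α) (n : α → ℕ) :
    ∑ i ∈ s, n i ^ 2 + s.sup n * #s
      ≤ (s.sup n + 1) * ∑ i ∈ s, n i + s.sup n * #{i ∈ s | n i = 0} := by
  have hpoint : ∀ i ∈ s, n i ^ 2 + s.sup n
      ≤ (s.sup n + 1) * n i + s.sup n * if n i = 0 then 1 else 0 := by
    intro i hi
    have hle : n i ≤ s.sup n := le_sup hi
    split_ifs with h
    · simp [h]
    · have : 1 ≤ n i := Nat.one_le_iff_ne_zero.mpr h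
      nlinarith
  calc ∑ i ∈ s, n i ^ 2 + s.sup n * #s
      = ∑ i ∈ s, (n i ^ 2 + s.sup n) := by rw [sum_add_distrib, sum_const, smul_eq_mul, mul_comm]
    _ ≤ ∑ i ∈ s, ((s.sup n + 1) * n i + s.sup n * if n i = 0 then 1 else 0) := sum_le_sum hpoint
    _ = (s.sup n + 1) * ∑ i ∈ s, n i + s.sup n * #{i ∈ s | n i = 0} := by
      rw [sum_add_distrib, ← mul_sum, ← mul_sum, sum_boole, Nat.cast_id]

variable [Fintype α]

theorem card_lt_sum_sq_of_sum_eq_card {n : α → ℕ} (hsum : ∑ i, n i = Fintype.card α)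
    (hne : n ≠ 1) : Fintype.card α < ∑ i, n i ^ 2 := by
  obtain ⟨i, hi⟩ : ∃ i, n i ≠ 1 := by simpa [funext_iff] using hne
  have hpos : 0 < ∑ j, ((n j : ℤ) - 1) ^ 2 :=
    sum_pos' (fun j _ => sq_nonneg _) ⟨i, mem_univ i, by
      have : (n i : ℤ) - 1 ≠ 0 := by omega
      positivity⟩
  have hexpand : ∑ j, ((n j : ℤ) - 1) ^ 2
      = ∑ j, (n j : ℤ) ^ 2 - 2 * ∑ j, (n j : ℤ) + Fintype.card α := by
    simp only [sub_sq, mul_one, one_pow, sum_add_distrib, sum_sub_distrib, ← mul_sum,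
      sum_const, card_univ, nsmul_eq_mul]
  have hsumℤ : ∑ j, (n j : ℤ) = Fintype.card α := by exact_mod_cast hsum
  have : (Fintype.card α : ℤ) < ∑ j, (n j : ℤ) ^ 2 := by linarith
  exact_mod_cast this

theorem card_le_card_filter_eq_zero_mul_sup {n : α → ℕ} (hsum : ∑ i, n i = Fintype.card α)
    (hdvd : Fintype.card α ∣ ∑ i, n i ^ 2) (hne : n ≠ 1) :
    Fintype.card α ≤ #{i | n i = 0} * univ.sup n := by
  obtain ⟨m, hm⟩ := hdvd
  have hlt := card_lt_sum_sq_of_sum_eq_card hsum hne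
  have htwo : 2 * Fintype.card α ≤ ∑ i, n i ^ 2 := by
    rw [hm] at hlt ⊢
    have : 1 < m := by nlinarith
    nlinarith
  have := sum_sq_add_sup_mul_card_le univ n
  rw [hsum, card_univ] at this
  nlinarith

end Counting

/-- The density bound for zeros of an integer-valued S-character `f ≠ 1` of a finite
group `G`: if `M` is the maximal value of `f`, then `|Z_f| / |G| ≥ 1 / M`, i.e.
`|Z_f| · M ≥ |G|`, where `Z_f` is the set of zeros of `f`. The (nonnegative integer)
values of `f` are recorded by the function `n : G → ℕ`. -/
theorem stmt_7 {G : Type} [Group G] [Fintype G] (f : G → ℂ) (n : G → ℕ)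
    (hvals : ∀ g, f g = (n g : ℂ))
    (hvirt : ∃ V W : FDRep ℂ G, ∀ g, f g = V.character g - W.character g)
    (hmean : (1 / (Fintype.card G : ℂ)) * ∑ g, f g = 1)
    (hne : f ≠ fun _ => 1) :
    Fintype.card G ≤ Nat.card {g : G // f g = 0} * Finset.univ.sup n := by
  obtain ⟨V, W, hVW⟩ := hvirt
  have hcard : (Fintype.card G : ℂ) ≠ 0 := Nat.cast_ne_zero.mpr Fintype.card_ne_zero
  have hsum : ∑ g, n g = Fintype.card G := by
    rw [one_div, inv_mul_eq_one₀ hcard] at hmean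
    exact_mod_cast (by simpa only [hvals] using hmean.symm : ∑ g, (n g : ℂ) = Fintype.card G)
  have hdvd : Fintype.card G ∣ ∑ g, n g ^ 2 := by
    obtain ⟨m, hm⟩ := FDRep.exists_sum_sq_character_sub_eq_card_mul V W
    simp only [← hVW, hvals] at hm
    exact Int.natCast_dvd_natCast.mp ⟨m, by exact_mod_cast hm⟩
  have hne' : n ≠ 1 := fun h => hne (funext fun g => by simp [hvals, h])
  have hzeros : Nat.card {g : G // f g = 0} = #{g | n g = 0} := by
    simp [Nat.card_eq_fintype_card, Fintype.card_subtype, hvals]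
  rw [hzeros]
  exact card_le_card_filter_eq_zero_mul_sup hsum hdvd hne'
end

section
/- Let f(t) = ∑_{n∈ℤ} a_n t^n be a Laurent polynomial with real coefficients which is positive, i.e., f(z) is a nonnegative real number for every z ∈ ℂ with |z| = 1. Let m ≥ 1 be an integer such that a_n = 0 for every integer n > m divisible by m. Then |a_m| ≤ a_0 / 2. -/
/-! Averaging `f` over a coset `η μ_N` of the `N`-th roots of unity keeps exactly the terms
`aₙ ηⁿ` with `N ∣ n`. For `N` beyond the degree this isolates a single coefficient, and since `f`
is real on the circle, conjugating that formula gives `a₋ₙ = aₙ`. For `N = m`, the hypothesis and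
this symmetry leave only `aₘ η⁻ᵐ + a₀ + aₘ ηᵐ`, an average of values of `f` and hence nonnegative;
choosing `ηᵐ = 1` and `ηᵐ = -1` gives `a₀ ± 2aₘ ≥ 0`. -/

open LaurentPolynomial ComplexOrder

/-- The value of a real Laurent polynomial `f = ∑ aₙ tⁿ` at a complex number `z ≠ 0`. -/
noncomputable def evalCircle (f : LaurentPolynomial ℝ) (z : ℂ) : ℂ :=
  Finsupp.sum (AddMonoidAlgebra.coeff f) fun n c => (c : ℂ) * z ^ n

/-- The coefficient `aₙ` of a real Laurent polynomial `f = ∑ aₙ tⁿ`. -/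
def coeffL (f : LaurentPolynomial ℝ) (n : ℤ) : ℝ := (AddMonoidAlgebra.coeff f : ℤ →₀ ℝ) n

theorem IsPrimitiveRoot.geom_sum_zpow {K : Type*} [Field K] {ω : K} {N : ℕ}
    (hω : IsPrimitiveRoot ω N) (j : ℤ) :
    ∑ k ∈ Finset.range N, (ω ^ j) ^ k = if (N : ℤ) ∣ j then (N : K) else 0 := by
  split_ifs with hdvd
  · simp [(hω.zpow_eq_one_iff_dvd j).mpr hdvd]
  · have hne : ω ^ j ≠ 1 := fun h => hdvd ((hω.zpow_eq_one_iff_dvd j).mp h)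
    rw [geom_sum_eq hne, ← zpow_natCast, ← zpow_mul, mul_comm, zpow_mul, zpow_natCast,
      hω.pow_eq_one, one_zpow, sub_self, zero_div]

theorem evalCircle_eq_sum (f : LaurentPolynomial ℝ) (z : ℂ) :
    evalCircle f z = ∑ n ∈ (AddMonoidAlgebra.coeff f).support, (coeffL f n : ℂ) * z ^ n :=
  rfl

theorem sum_evalCircle_mul_rootsOfUnity (f : LaurentPolynomial ℝ) {N : ℕ} {ω : ℂ}
    (hω : IsPrimitiveRoot ω N) (η : ℂ) (t : ℤ) :
    ∑ k ∈ Finset.range N, evalCircle f (η * ω ^ k) * ω ^ ((k : ℤ) * t) =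
      N * ∑ n ∈ (AddMonoidAlgebra.coeff f).support with (N : ℤ) ∣ n + t,
        (coeffL f n : ℂ) * η ^ n := by
  rcases eq_or_ne N 0 with rfl | hN
  · simp
  have hω0 : ω ≠ 0 := hω.ne_zero hN
  have hterm : ∀ (k : ℕ) (n : ℤ), (coeffL f n : ℂ) * (η * ω ^ k) ^ n * ω ^ ((k : ℤ) * t) =
      (coeffL f n : ℂ) * η ^ n * (ω ^ (n + t)) ^ k := by
    intro k n
    rw [mul_zpow, ← zpow_natCast (ω ^ (n + t)), ← zpow_natCast ω, ← zpow_mul, ← zpow_mul,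
      show (n + t) * (k : ℤ) = k * n + k * t by ring, zpow_add₀ hω0]
    ring
  simp only [evalCircle_eq_sum, Finset.sum_mul, hterm]
  rw [Finset.sum_comm, Finset.mul_sum, Finset.sum_filter]
  refine Finset.sum_congr rfl fun n _ => ?_
  rw [← Finset.mul_sum, hω.geom_sum_zpow]
  split_ifs <;> simp [mul_comm]

theorem sum_support_filter_eq_sum (f : LaurentPolynomial ℝ) (P : ℤ → Prop) [DecidablePred P]
    (S : Finset ℤ) (hPS : ∀ n ∈ (AddMonoidAlgebra.coeff f).support, P n → n ∈ S)
    (hSP : ∀ n ∈ S, P n) (g : ℤ → ℂ) :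
    ∑ n ∈ (AddMonoidAlgebra.coeff f).support with P n, (coeffL f n : ℂ) * g n =
      ∑ n ∈ S, (coeffL f n : ℂ) * g n := by
  refine Finset.sum_subset (fun n hn => ?_) fun n hnS hn => ?_
  · rw [Finset.mem_filter] at hn
    exact hPS n hn.1 hn.2
  · have : n ∉ (AddMonoidAlgebra.coeff f).support := fun hsupp =>
      hn (Finset.mem_filter.mpr ⟨hsupp, hSP n hnS⟩)
    simp [coeffL, Finsupp.notMem_support_iff.mp this]

theorem sum_evalCircle_rootsOfUnity_eq_coeffL (f : LaurentPolynomial ℝ) {N : ℕ} {ω : ℂ}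
    (hω : IsPrimitiveRoot ω N) (t : ℤ)
    (hN : ∀ n ∈ (AddMonoidAlgebra.coeff f).support, |n + t| < N) :
    ∑ k ∈ Finset.range N, evalCircle f (ω ^ k) * ω ^ ((k : ℤ) * t) = N * coeffL f (-t) := by
  have hsection := sum_evalCircle_mul_rootsOfUnity f hω 1 t
  have hsingle : ∀ n ∈ (AddMonoidAlgebra.coeff f).support, (N : ℤ) ∣ n + t →
      n ∈ ({-t} : Finset ℤ) := fun n hn hdvd => by
      simpa [eq_neg_iff_add_eq_zero] using Int.eq_zero_of_abs_lt_dvd hdvd (hN n hn)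
  rw [sum_support_filter_eq_sum f _ _ hsingle (by simp)] at hsection
  simpa using hsection

theorem coeffL_neg_of_nonneg (f : LaurentPolynomial ℝ)
    (hpos : ∀ z : ℂ, ‖z‖ = 1 → 0 ≤ evalCircle f z) (n : ℤ) :
    coeffL f (-n) = coeffL f n := by
  set B := (AddMonoidAlgebra.coeff f).support.sup Int.natAbs
  set N := B + n.natAbs + 1
  have hN : N ≠ 0 := by omega
  have hbound : ∀ t : ℤ, |t| = |n| → ∀ j ∈ (AddMonoidAlgebra.coeff f).support, |j + t| < N := by
    intro t ht j hj
    have hj : j.natAbs ≤ B := Finset.le_sup (f := Int.natAbs) hj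
    have : (j + t).natAbs ≤ j.natAbs + t.natAbs := Int.natAbs_add_le j t
    rw [Int.abs_eq_natAbs, Int.abs_eq_natAbs, Int.natCast_inj] at *
    omega
  obtain ⟨ω, hω⟩ : ∃ ω : ℂ, IsPrimitiveRoot ω N := ⟨_, Complex.isPrimitiveRoot_exp N hN⟩
  have hω1 : ‖ω‖ = 1 := hω.norm'_eq_one hN
  have hconj : ∀ k : ℕ, starRingEnd ℂ (evalCircle f (ω ^ k) * ω ^ ((k : ℤ) * -n)) =
      evalCircle f (ω ^ k) * ω ^ ((k : ℤ) * n) := by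
    intro k
    have hreal := (Complex.nonneg_iff.mp (hpos (ω ^ k) (by rw [norm_pow, hω1, one_pow]))).2
    rw [map_mul, Complex.conj_eq_iff_im.mpr hreal.symm, map_zpow₀,
      ← Complex.inv_eq_conj hω1, inv_zpow', mul_neg, neg_neg]
  have h := congrArg (starRingEnd ℂ)
    (sum_evalCircle_rootsOfUnity_eq_coeffL f hω (-n) (hbound _ (abs_neg n)))
  rw [map_sum, Finset.sum_congr rfl fun k _ => hconj k,
    sum_evalCircle_rootsOfUnity_eq_coeffL f hω n (hbound n rfl), neg_neg, map_mul,
    Complex.conj_natCast, Complex.conj_ofReal] at h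
  exact_mod_cast mul_left_cancel₀ (Nat.cast_ne_zero.mpr hN) h

theorem coeffL_eq_zero_of_lt_abs_of_dvd (f : LaurentPolynomial ℝ)
    (hpos : ∀ z : ℂ, ‖z‖ = 1 → 0 ≤ evalCircle f z) {m : ℕ}
    (hvan : ∀ n : ℤ, (m : ℤ) < n → (m : ℤ) ∣ n → coeffL f n = 0) (n : ℤ)
    (hn : (m : ℤ) < |n|) (hdvd : (m : ℤ) ∣ n) : coeffL f n = 0 := by
  rcases abs_cases n with ⟨hn', -⟩ | ⟨hn', -⟩
  · exact hvan n (hn' ▸ hn) hdvd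
  · rw [← neg_neg n, coeffL_neg_of_nonneg f hpos]
    exact hvan (-n) (hn' ▸ hn) (dvd_neg.mpr hdvd)

theorem zero_le_coeffL_section (f : LaurentPolynomial ℝ)
    (hpos : ∀ z : ℂ, ‖z‖ = 1 → 0 ≤ evalCircle f z) {m : ℕ} (hm : 1 ≤ m)
    (hvan : ∀ n : ℤ, (m : ℤ) < |n| → (m : ℤ) ∣ n → coeffL f n = 0) {η : ℂ} (hη : ‖η‖ = 1) :
    0 ≤ (coeffL f (-m) : ℂ) * η ^ (-(m : ℤ)) + coeffL f 0 + coeffL f m * η ^ (m : ℤ) := by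
  have hm0 : m ≠ 0 := by omega
  obtain ⟨ω, hω⟩ : ∃ ω : ℂ, IsPrimitiveRoot ω m := ⟨_, Complex.isPrimitiveRoot_exp m hm0⟩
  have hω1 : ‖ω‖ = 1 := hω.norm'_eq_one hm0
  have hsection := sum_evalCircle_mul_rootsOfUnity f hω η 0
  simp only [mul_zero, zpow_zero, mul_one, add_zero] at hsection
  have hmultiples : ∀ n ∈ (AddMonoidAlgebra.coeff f).support, (m : ℤ) ∣ n →
      n ∈ ({-(m : ℤ), 0, (m : ℤ)} : Finset ℤ) := by
    rintro n hn ⟨c, rfl⟩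
    have hc : |c| ≤ 1 := by
      by_contra! hc
      refine Finsupp.mem_support_iff.mp hn (hvan _ ?_ (dvd_mul_right _ _))
      rw [abs_mul, Nat.abs_cast]
      nlinarith
    rcases abs_le.mp hc with ⟨hc₁, hc₂⟩
    interval_cases c <;> simp
  rw [sum_support_filter_eq_sum f _ _ hmultiples (by simp), Finset.sum_insert (by simp; omega),
    Finset.sum_pair (by simp; omega), zpow_zero, mul_one, ← add_assoc] at hsection
  have hnonneg : 0 ≤ (m : ℂ) * _ := hsection ▸ Finset.sum_nonneg fun k _ => hpos _ (by
    rw [norm_mul, norm_pow, hη, hω1, one_pow, one_mul])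
  exact le_of_mul_le_mul_left (by simpa using hnonneg) (by exact_mod_cast hm)

/-- Proposition 5.2 (i): if the Laurent polynomial `f = ∑ aₙ tⁿ` is positive on the unit
circle and `aₙ = 0` for every `n > m` divisible by `m`, then `|aₘ| ≤ a₀ / 2`. -/
theorem stmt_8 (f : LaurentPolynomial ℝ)
    (hpos : ∀ z : ℂ, ‖z‖ = 1 → 0 ≤ evalCircle f z)
    (m : ℕ) (hm : 1 ≤ m)
    (hvan : ∀ n : ℤ, (m : ℤ) < n → (m : ℤ) ∣ n → coeffL f n = 0) :
    |coeffL f m| ≤ coeffL f 0 / 2 := by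
  have hsection : ∀ η : ℂ, ‖η‖ = 1 →
      0 ≤ (coeffL f m : ℂ) * η ^ (-(m : ℤ)) + coeffL f 0 + coeffL f m * η ^ (m : ℤ) :=
    fun η hη => by
      simpa only [coeffL_neg_of_nonneg f hpos] using zero_le_coeffL_section f hpos hm
        (coeffL_eq_zero_of_lt_abs_of_dvd f hpos hvan) hη
  have hplus : 0 ≤ coeffL f 0 + 2 * coeffL f m := by
    have := hsection 1 (by simp)
    simp only [one_zpow, mul_one] at this
    exact_mod_cast (by push_cast; linear_combination this : (0 : ℂ) ≤ ((_ : ℝ) : ℂ))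
  have hminus : 0 ≤ coeffL f 0 - 2 * coeffL f m := by
    set η := Complex.exp ((Real.pi / m : ℝ) * Complex.I)
    have hηm : η ^ (m : ℤ) = -1 := by
      rw [zpow_natCast, ← Complex.exp_nat_mul, ← Complex.exp_pi_mul_I]
      congr 1
      push_cast
      field_simp
    have := hsection η (Complex.norm_exp_ofReal_mul_I _)
    rw [zpow_neg, hηm] at this
    exact_mod_cast (by push_cast; linear_combination this : (0 : ℂ) ≤ ((_ : ℝ) : ℂ))
  rw [abs_le]
  constructor <;> linarith
end

section
/- Let n ≥ 1 and let a : ℤ^n → ℤ be a finitely supported function such that a(0) = 1 and such that for every u = (u_1, …, u_n) ∈ ℂ^n with |u_j| = 1 for all j, the sum ∑_{v∈ℤ^n} a(v) · u_1^{v_1} ⋯ u_n^{v_n} is a nonnegative real number. Then a(v) = 0 for every v ≠ 0; that is, the function equals the constant 1. -/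
/-!
Sampling `F(u) = ∑ᵥ a(v) uᵛ ≥ 0` at the points of a fine grid of roots of unity turns `F` into
a finite positive measure on the torus whose Fourier coefficients are proportional to `a` on the
finitely many frequencies that matter. Hence `|a v| ≤ a 0 = 1`, so a nonzero integer `a v` is
`±1`. Equality in the triangle inequality then forces `uᵛ = a v` on the support of the measure,
so the coefficient at `m • v` is `(a v)ᵐ ≠ 0` for every `m`, contradicting finite support.
-/

open Complex Finset ComplexOrder

section Positivity

variable {ι : Type*} [Fintype ι] {f : ι → ℝ} {z : ι → ℂ}

theorem norm_sum_ofReal_mul_le (hf : ∀ k, 0 ≤ f k) (hz : ∀ k, ‖z k‖ ≤ 1) :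
    ‖∑ k, (f k : ℂ) * z k‖ ≤ ‖∑ k, (f k : ℂ)‖ := by
  rw [← ofReal_sum, Complex.norm_of_nonneg (sum_nonneg fun k _ => hf k)]
  refine (norm_sum_le _ _).trans (sum_le_sum fun k _ => ?_)
  rw [norm_mul, Complex.norm_of_nonneg (hf k)]
  exact mul_le_of_le_one_right (hf k) (hz k)

theorem eq_one_of_norm_le_one_of_re_eq_one {w : ℂ} (hw : ‖w‖ ≤ 1) (hre : w.re = 1) : w = 1 := by
  have h : 0 ≤ w := re_eq_norm.mp (le_antisymm (re_le_norm w) (hw.trans_eq hre.symm))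
  rw [← re_add_im w, hre, ← (nonneg_iff.mp h).2]
  simp

theorem eq_zero_or_eq_of_sum_ofReal_mul_eq (hf : ∀ k, 0 ≤ f k) (hz : ∀ k, ‖z k‖ ≤ 1)
    {ε : ℂ} (hε : ‖ε‖ = 1) (h : ∑ k, (f k : ℂ) * z k = ε * ∑ k, (f k : ℂ)) (k : ι) :
    f k = 0 ∨ z k = ε := by
  set w := fun k => (starRingEnd ℂ) ε * z k
  have hw : ∀ k, ‖w k‖ ≤ 1 := fun k => by
    rw [norm_mul, RCLike.norm_conj, hε, one_mul]
    exact hz k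
  have hsum : ∑ k, f k * (1 - (w k).re) = 0 := calc
    _ = ∑ k, f k - ((starRingEnd ℂ) ε * ∑ k, (f k : ℂ) * z k).re := by
      simp only [w, mul_sub, mul_one, sum_sub_distrib, mul_sum, re_sum, mul_left_comm _ (f _ : ℂ),
        re_ofReal_mul]
    _ = ∑ k, f k - ((starRingEnd ℂ) ε * ε * ∑ k, (f k : ℂ)).re := by rw [h, mul_assoc]
    _ = 0 := by simp [conj_mul', hε, ← ofReal_sum]
  have hterm := (sum_eq_zero_iff_of_nonneg fun k _ =>
    mul_nonneg (hf k) (sub_nonneg.mpr ((re_le_norm _).trans (hw k)))).mp hsum k (mem_univ k)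
  refine (mul_eq_zero.mp hterm).imp_right fun hre => ?_
  have hw1 : w k = 1 := eq_one_of_norm_le_one_of_re_eq_one (hw k) (by linarith)
  calc z k = ε * w k := by rw [← mul_assoc, mul_conj', hε]; simp
    _ = ε := by rw [hw1, mul_one]

theorem sum_ofReal_mul_pow_eq (hf : ∀ k, 0 ≤ f k) (hz : ∀ k, ‖z k‖ ≤ 1)
    {ε : ℂ} (hε : ‖ε‖ = 1) (h : ∑ k, (f k : ℂ) * z k = ε * ∑ k, (f k : ℂ)) (m : ℕ) :
    ∑ k, (f k : ℂ) * z k ^ m = ε ^ m * ∑ k, (f k : ℂ) := by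
  rw [mul_sum]
  refine sum_congr rfl fun k _ => ?_
  rcases eq_zero_or_eq_of_sum_ofReal_mul_eq hf hz hε h k with hfk | hzk
  · simp [hfk]
  · rw [hzk, mul_comm]

end Positivity

section Lattice

variable {σ K : Type*} [Fintype σ] [Field K]

def laurentMonomial (v : σ → ℤ) (u : σ → K) : K := ∏ j, u j ^ v j

def laurentEval (a : (σ → ℤ) →₀ ℤ) (u : σ → K) : K :=
  a.sum fun v c => (c : K) * laurentMonomial v u

theorem laurentMonomial_add {u : σ → K} (hu : ∀ j, u j ≠ 0) (v w : σ → ℤ) :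
    laurentMonomial (v + w) u = laurentMonomial v u * laurentMonomial w u := by
  simp only [laurentMonomial, ← prod_mul_distrib, Pi.add_apply, zpow_add₀ (hu _)]

theorem laurentMonomial_nsmul (m : ℕ) (v : σ → ℤ) (u : σ → K) :
    laurentMonomial (m • v) u = laurentMonomial v u ^ m := by
  simp only [laurentMonomial, ← prod_pow, Pi.smul_apply, nsmul_eq_mul, mul_comm (m : ℤ), zpow_mul,
    zpow_natCast]

theorem norm_laurentMonomial {u : σ → ℂ} (hu : ∀ j, ‖u j‖ = 1) (v : σ → ℤ) :
    ‖laurentMonomial v u‖ = 1 := by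
  simp [laurentMonomial, hu]

def rootGrid {N : ℕ} (ζ : K) (k : σ → Fin N) : σ → K := fun j => ζ ^ (k j : ℕ)

namespace IsPrimitiveRoot

variable {N : ℕ} {ζ : K}

theorem sum_pow_zpow_eq_ite (hζ : IsPrimitiveRoot ζ N) (m : ℤ) :
    ∑ k : Fin N, (ζ ^ (k : ℕ)) ^ m = if (N : ℤ) ∣ m then (N : K) else 0 := by
  simp_rw [← zpow_natCast, ← zpow_mul, mul_comm _ m, zpow_mul, zpow_natCast]
  rw [Fin.sum_univ_eq_sum_range (fun i => (ζ ^ m) ^ i)]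
  split_ifs with h
  · simp [(hζ.zpow_eq_one_iff_dvd m).mpr h]
  · have hζm : ζ ^ m ≠ 1 := mt (hζ.zpow_eq_one_iff_dvd m).mp h
    rw [geom_sum_eq hζm, ← zpow_natCast, ← zpow_mul, mul_comm, zpow_mul, zpow_natCast,
      hζ.pow_eq_one, one_zpow, sub_self, zero_div]

variable [DecidableEq σ]

theorem sum_laurentMonomial_rootGrid (hζ : IsPrimitiveRoot ζ N) (w : σ → ℤ) :
    ∑ k : σ → Fin N, laurentMonomial w (rootGrid ζ k) =
      if ∀ j, (N : ℤ) ∣ w j then (N : K) ^ Fintype.card σ else 0 := by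
  simp only [laurentMonomial, rootGrid]
  rw [← Fintype.prod_sum (fun j (c : Fin N) => (ζ ^ (c : ℕ)) ^ w j)]
  simp only [hζ.sum_pow_zpow_eq_ite]
  split_ifs with h
  · simp [h]
  · obtain ⟨j, hj⟩ := not_forall.mp h
    exact prod_eq_zero (mem_univ j) (if_neg hj)

theorem sum_laurentEval_rootGrid_mul (hζ : IsPrimitiveRoot ζ N) (hN : N ≠ 0)
    (a : (σ → ℤ) →₀ ℤ) {w : σ → ℤ} (hw : ∀ v ∈ a.support, (∀ j, (N : ℤ) ∣ v j - w j) → v = w) :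
    ∑ k : σ → Fin N, laurentEval a (rootGrid ζ k) * laurentMonomial (-w) (rootGrid ζ k) =
      (N : K) ^ Fintype.card σ * a w := by
  have hu : ∀ k : σ → Fin N, ∀ j, rootGrid ζ k j ≠ 0 := fun k j => pow_ne_zero _ (hζ.ne_zero hN)
  simp_rw [laurentEval, Finsupp.sum, sum_mul, mul_assoc, ← laurentMonomial_add (hu _),
    ← sub_eq_add_neg]
  rw [sum_comm]
  simp_rw [← mul_sum, hζ.sum_laurentMonomial_rootGrid, Pi.sub_apply]
  rw [sum_eq_single w]
  · simp [mul_comm]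
  · intro v hv hvw
    rw [if_neg fun h => hvw (hw v hv h), mul_zero]
  · intro hw
    rw [Finsupp.notMem_support_iff.mp hw, Int.cast_zero, zero_mul]

end IsPrimitiveRoot

end Lattice

theorem exists_modulus_injOn {σ : Type*} [Fintype σ] (S : Finset (σ → ℤ)) :
    ∃ N : ℕ, N ≠ 0 ∧ ∀ x ∈ S, ∀ y ∈ S, (∀ j, (N : ℤ) ∣ x j - y j) → x = y := by
  set B := S.sup fun x => univ.sup fun j => (x j).natAbs
  have hB : ∀ x ∈ S, ∀ j, (x j).natAbs ≤ B := fun x hx j =>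
    (le_sup (f := fun j => (x j).natAbs) (mem_univ j)).trans
      (le_sup (f := fun x => univ.sup fun j => (x j).natAbs) hx)
  refine ⟨2 * B + 1, by omega, fun x hx y hy hxy => funext fun j => ?_⟩
  have hx := hB x hx j
  have hy := hB y hy j
  have := Int.eq_zero_of_dvd_of_natAbs_lt_natAbs (hxy j) (by omega)
  omega

theorem exists_torus_quadrature {σ : Type*} [Fintype σ] [DecidableEq σ] (a : (σ → ℤ) →₀ ℤ)
    (hpos : ∀ u : σ → ℂ, (∀ j, ‖u j‖ = 1) → 0 ≤ laurentEval a u)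
    (S : Finset (σ → ℤ)) (hS : a.support ⊆ S) :
    ∃ (N : ℕ) (f : (σ → Fin N) → ℝ) (u : (σ → Fin N) → σ → ℂ), N ≠ 0 ∧ (∀ k, 0 ≤ f k) ∧
      (∀ k j, ‖u k j‖ = 1) ∧
      ∀ w ∈ S, ∑ k, (f k : ℂ) * laurentMonomial (-w) (u k) = (N : ℂ) ^ Fintype.card σ * a w := by
  obtain ⟨N, hN, hSinj⟩ := exists_modulus_injOn S
  obtain ⟨ζ, hζ⟩ : ∃ ζ : ℂ, IsPrimitiveRoot ζ N := ⟨_, isPrimitiveRoot_exp N hN⟩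
  have hu : ∀ (k : σ → Fin N) j, ‖rootGrid ζ k j‖ = 1 := fun k j => by
    simp [rootGrid, hζ.norm'_eq_one hN]
  have hF : ∀ k, 0 ≤ laurentEval a (rootGrid ζ k) := fun k => hpos _ (hu k)
  have hFre : ∀ k, laurentEval a (rootGrid ζ k) = (laurentEval a (rootGrid ζ k)).re := fun k =>
    eq_re_of_ofReal_le (r := 0) (by rw [ofReal_zero]; exact hF k)
  refine ⟨N, fun k => (laurentEval a (rootGrid ζ k)).re, rootGrid ζ, hN,
    fun k => (nonneg_iff.mp (hF k)).1, hu, fun w hw => ?_⟩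
  simpa only [← hFre] using hζ.sum_laurentEval_rootGrid_mul hN a
    fun v hv h => hSinj v (hS hv) w hw h

theorem exists_nsmul_notMem {M : Type*} [AddCommGroup M] [IsAddTorsionFree M] {v : M}
    (hv : v ≠ 0) (s : Finset M) : ∃ m : ℕ, m • v ∉ s := by
  have hinj : Function.Injective fun m : ℕ => m • v := by
    simpa [Function.comp_def] using (smul_left_injective ℤ hv).comp Nat.cast_injective
  obtain ⟨_, ⟨m, rfl⟩, hm⟩ := (Set.infinite_range_of_injective hinj).exists_notMem_finset s
  exact ⟨m, hm⟩

open ComplexOrder in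
theorem stmt_13_general (n : ℕ) (a : (Fin n → ℤ) →₀ ℤ)
    (h0 : a 0 = 1)
    (hpos : ∀ u : Fin n → ℂ, (∀ j, ‖u j‖ = 1) →
      0 ≤ a.sum fun v c => (c : ℂ) * ∏ j, u j ^ v j) :
    ∀ v : Fin n → ℤ, v ≠ 0 → a v = 0 := by
  intro v hv
  by_contra hav
  obtain ⟨m, hm⟩ := exists_nsmul_notMem hv a.support
  obtain ⟨N, f, u, hN, hf, hu, hcoeff⟩ := exists_torus_quadrature a hpos
    (insert 0 (insert v (insert (m • v) a.support))) fun w hw => by simp [hw]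
  simp only [Fintype.card_fin, mem_insert, forall_eq_or_imp] at hcoeff
  obtain ⟨hsum, hcoeff_v, hcoeff_mv, -⟩ := hcoeff
  simp only [neg_zero, laurentMonomial, Pi.zero_apply, zpow_zero, prod_const_one, mul_one, h0,
    Int.cast_one] at hsum
  have hχ : ∀ k, ‖laurentMonomial (-v) (u k)‖ ≤ 1 := fun k => (norm_laurentMonomial (hu k) _).le
  have hv1 : ‖(a v : ℂ)‖ = 1 := by
    have h := norm_sum_ofReal_mul_le hf hχ
    rw [hcoeff_v, hsum, norm_mul, mul_le_iff_le_one_right (by simp [Nat.pos_of_ne_zero hN])] at h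
    refine le_antisymm h ?_
    rw [norm_intCast]
    exact_mod_cast Int.one_le_abs hav
  have hpow := sum_ofReal_mul_pow_eq hf hχ hv1 (by rw [hcoeff_v, hsum, mul_comm]) m
  simp_rw [← laurentMonomial_nsmul, smul_neg, hcoeff_mv, hsum, Finsupp.notMem_support_iff.mp hm]
    at hpow
  simp [hav, hN] at hpow

open ComplexOrder in
/-- Proposition 4.6 (= Proposition 5.7): a torus has no S-character other than `1`.
A virtual character of the `n`-dimensional torus is a finitely supported `ℤ`-valued
function `a` on the character lattice `ℤⁿ`; if `a 0 = 1` and its value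
`∑ᵥ a(v) u₁^{v₁} ⋯ uₙ^{vₙ}` at every point `u` of the unit torus is a nonnegative real
number, then `a` is the constant character `1`. -/
theorem stmt_13 (n : ℕ) (hn : 1 ≤ n) (a : (Fin n → ℤ) →₀ ℤ)
    (h0 : a 0 = 1)
    (hpos : ∀ u : Fin n → ℂ, (∀ j, ‖u j‖ = 1) →
      0 ≤ a.sum fun v c => (c : ℂ) * ∏ j, u j ^ v j) :
    ∀ v : Fin n → ℤ, v ≠ 0 → a v = 0 :=
  stmt_13_general n a h0 hpos
end
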